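/- arXiv:1911.01169 — 5 statements merged into one kernel-verified Lean document; each statement's English description precedes it below -/
import Mathlib

section
/- Let α ∈ (0,1) and let I be an interval of integers. Suppose I₁, …, I_s ⊆ I are pairwise disjoint intervals with Σ_{h=1}^s |I_h| ≥ α|I|. Then there exists a set G ⊆ [s] such that Σ_{h∈G} |I_h| ≥ (α/4)|I|, and for every interval J ⊆ I that contains some I_h with h ∈ G, we have Σ_{h∈[s] : I_h ⊆ J} |I_h| ≥ (α/4)|J|. -/
/-!
Call `I_h` bad if some interval `J ⊆ I` containing it is light, i.e. the `I_k ⊆ J` have total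
length `< (α/4)|J|`, and let `G` be the good indices; the second property is then the definition
of `G`. For the first, sweep from left to right: take the leftmost remaining bad `I_h`, and among
the remaining bad intervals whose light witness starts left of it, select the witness reaching
furthest right; it swallows every remaining bad interval ending before its right end. Each
selected witness begins after the right end of the witness selected three steps earlier, so the
selected witnesses have total length `≤ 3|I|` and the bad intervals total `≤ 3(α/4)|I|`.
-/

/-- A set of consecutive integers. -/
def IsIntervalZ (S : Finset ℤ) : Prop := ∃ a b : ℤ, S = Finset.Icc a b

open Finset Function

theorem Int.cast_card_Icc {R : Type*} [Ring R] {a b : ℤ} (h : a ≤ b + 1) :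
    (#(Icc a b) : R) = b + 1 - a := by
  rw [← Int.cast_natCast, Int.card_Icc_of_le a b h, Int.cast_sub, Int.cast_add, Int.cast_one]

theorem Int.lt_or_lt_of_disjoint_Icc {a b a' b' : ℤ} (ha : a ≤ b) (ha' : a' ≤ b')
    (h : Disjoint (Icc a b) (Icc a' b')) : b < a' ∨ b' < a := by
  by_contra! hle
  exact disjoint_left.1 h (mem_Icc.2 ⟨le_max_left a a', max_le ha hle.1⟩)
    (mem_Icc.2 ⟨le_max_right a a', max_le hle.2 ha'⟩)

section GreedyCover

variable {ι : Type*} {S : Finset ι} {u v : ι → ℤ} {m : ι → ℝ} {c : ℝ}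

/-- `x ≤ y ≤ z` are the right ends of the last three witnesses selected by the sweep; the
intervals still to be covered lie right of `z`, start at or after `y`, and have witnesses
starting after `x`. -/
theorem sum_le_of_light_covers_beyond {p q : ι → ℤ} {B : ℤ} (hc : 0 ≤ c)
    (hm : ∀ h ∈ S, 0 ≤ m h) (huv : ∀ h ∈ S, u h ≤ v h)
    (hdisj : ∀ h ∈ S, ∀ k ∈ S, h ≠ k → v h < u k ∨ v k < u h)
    (hpu : ∀ h ∈ S, p h ≤ u h) (hvq : ∀ h ∈ S, v h ≤ q h) (hqB : ∀ h ∈ S, q h ≤ B)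
    (hlight : ∀ h ∈ S, ∑ k ∈ S with p h ≤ u k ∧ v k ≤ q h, m k ≤ c * #(Icc (p h) (q h)))
    (T : Finset ι) (hTS : T ⊆ S) (x y z : ℤ) (hxy : x ≤ y) (hyz : y ≤ z) (hzB : z ≤ B)
    (hT : ∀ h ∈ T, z < v h ∧ y ≤ u h ∧ x < p h) :
    ∑ h ∈ T, m h ≤ c * ((B - x) + (B - y) + (B - z)) := by
  induction T using Finset.strongInduction generalizing x y z with
  | H T ih =>
  rcases T.eq_empty_or_nonempty with rfl | hTne
  · rw [sum_empty]
    exact mul_nonneg hc (by exact_mod_cast (show (0 : ℤ) ≤ B - x + (B - y) + (B - z) by omega))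
  obtain ⟨b, hbT, hb_min⟩ := T.exists_min_image u hTne
  obtain ⟨a, haC, ha_max⟩ := (T.filter fun h => p h ≤ u b).exists_max_image q
    ⟨b, mem_filter.2 ⟨hbT, hpu b (hTS hbT)⟩⟩
  obtain ⟨haT, hpa⟩ := mem_filter.1 haC
  have hvb : v b ≤ q a :=
    (hvq b (hTS hbT)).trans (ha_max b (mem_filter.2 ⟨hbT, hpu b (hTS hbT)⟩))
  have hfirst : ∑ h ∈ T with v h ≤ q a, m h ≤ c * (q a - x) := by
    calc ∑ h ∈ T with v h ≤ q a, m h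
        ≤ ∑ k ∈ S with p a ≤ u k ∧ v k ≤ q a, m k := by
          refine sum_le_sum_of_subset_of_nonneg (fun h hh => ?_)
            fun k hk _ => hm k (mem_filter.1 hk).1
          obtain ⟨hhT, hvh⟩ := mem_filter.1 hh
          exact mem_filter.2 ⟨hTS hhT, hpa.trans (hb_min h hhT), hvh⟩
      _ ≤ c * #(Icc (p a) (q a)) := hlight a (hTS haT)
      _ ≤ c * (q a - x) := by
          have hpq : p a ≤ q a + 1 := by
            linarith [hpu a (hTS haT), huv a (hTS haT), hvq a (hTS haT)]
          rw [Int.cast_card_Icc hpq]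
          have : (x : ℝ) + 1 ≤ p a := by exact_mod_cast (hT a haT).2.2
          exact mul_le_mul_of_nonneg_left (by linarith) hc
  have hrest : ∑ h ∈ T with ¬ v h ≤ q a, m h ≤ c * ((B - y) + (B - z) + (B - q a)) := by
    refine ih _ (filter_ssubset.2 ⟨b, hbT, not_not.2 hvb⟩) ((filter_subset _ T).trans hTS)
      y z (q a) hyz ((hT b hbT).1.trans_le hvb).le (hqB a (hTS haT)) fun h hh => ?_
    obtain ⟨hhT, hqv⟩ := mem_filter.1 hh
    rw [not_le] at hqv
    refine ⟨hqv, ?_, ?_⟩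
    · by_contra! hzu
      have hhb : h ≠ b := by rintro rfl; exact hvb.not_gt hqv
      rcases hdisj h (hTS hhT) b (hTS hbT) hhb with hvu | hvu
      · linarith [huv b (hTS hbT)]
      · linarith [(hT b hbT).1]
    · by_contra! hpy
      have : q h ≤ q a := ha_max h (mem_filter.2 ⟨hhT, hpy.trans (hT b hbT).2.1⟩)
      linarith [hvq h (hTS hhT)]
  rw [← sum_filter_add_sum_filter_not T fun h => v h ≤ q a]
  linarith

theorem sum_le_three_mul_card_of_light_covers {A B : ℤ} (hc : 0 ≤ c)
    (hm : ∀ h ∈ S, 0 ≤ m h) (huv : ∀ h ∈ S, u h ≤ v h)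
    (hdisj : ∀ h ∈ S, ∀ k ∈ S, h ≠ k → v h < u k ∨ v k < u h)
    (hcover : ∀ h ∈ S, ∃ p q : ℤ, A ≤ p ∧ p ≤ u h ∧ v h ≤ q ∧ q ≤ B ∧
      ∑ k ∈ S with p ≤ u k ∧ v k ≤ q, m k ≤ c * #(Icc p q)) :
    ∑ h ∈ S, m h ≤ 3 * c * #(Icc A B) := by
  rcases S.eq_empty_or_nonempty with rfl | ⟨h₀, hh₀⟩
  · rw [sum_empty]
    positivity
  choose! p q hAp hpu hvq hqB hlight using hcover
  have hAB : A ≤ B + 1 := by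
    linarith [hAp h₀ hh₀, hpu h₀ hh₀, huv h₀ hh₀, hvq h₀ hh₀, hqB h₀ hh₀]
  have := sum_le_of_light_covers_beyond hc hm huv hdisj hpu hvq hqB hlight S subset_rfl
    (A - 1) (A - 1) (A - 1) le_rfl le_rfl (by linarith) fun h hh => ?_
  · rw [Int.cast_card_Icc hAB]
    push_cast at this
    linarith
  · refine ⟨?_, ?_, ?_⟩ <;> linarith [hAp h hh, hpu h hh, huv h hh]

end GreedyCover

theorem sum_card_le_of_light_interval_covers {ι : Type*} [Fintype ι] {Is : ι → Finset ℤ}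
    {S : Finset ι} {c : ℝ} {A B : ℤ} (hc : 0 ≤ c) (hint : ∀ h, IsIntervalZ (Is h))
    (hdisj : Pairwise (Disjoint on Is))
    (hcover : ∀ h ∈ S, ∃ J : Finset ℤ, IsIntervalZ J ∧ J ⊆ Icc A B ∧ Is h ⊆ J ∧
      ∑ k with Is k ⊆ J, (#(Is k) : ℝ) < c * #J) :
    ∑ h ∈ S, (#(Is h) : ℝ) ≤ 3 * c * #(Icc A B) := by
  classical
  choose u v huv using hint
  rw [← sum_filter_of_ne (p := fun h => u h ≤ v h) fun h _ hne => ?_]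
  · refine sum_le_three_mul_card_of_light_covers hc (fun _ _ => by positivity)
      (fun h hh => (mem_filter.1 hh).2) (fun h hh k hk hne => ?_) fun h hh => ?_
    · refine Int.lt_or_lt_of_disjoint_Icc (mem_filter.1 hh).2 (mem_filter.1 hk).2 ?_
      rw [← huv h, ← huv k]
      exact hdisj hne
    · obtain ⟨hhS, huvh⟩ := mem_filter.1 hh
      obtain ⟨-, ⟨p, q, rfl⟩, hJI, hhJ, hlight⟩ := hcover h hhS
      rw [huv h, Icc_subset_Icc_iff huvh] at hhJ
      rw [Icc_subset_Icc_iff (hhJ.1.trans (huvh.trans hhJ.2))] at hJI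
      refine ⟨p, q, hJI.1, hhJ.1, hhJ.2, hJI.2, le_trans ?_ hlight.le⟩
      refine sum_le_sum_of_subset_of_nonneg (fun k hk => ?_) fun _ _ _ => by positivity
      obtain ⟨-, hpk, hkq⟩ := mem_filter.1 hk
      exact mem_filter.2 ⟨mem_univ k, huv k ▸ Icc_subset_Icc hpk hkq⟩
  · by_contra hvu
    simp [huv h, Icc_eq_empty hvu] at hne

theorem stmt_0_general (α : ℝ) (hα0 : 0 < α)
    (I : Finset ℤ) (hI : IsIntervalZ I)
    (s : ℕ) (Is : Fin s → Finset ℤ)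
    (hint : ∀ h, IsIntervalZ (Is h))
    (hdisj : ∀ h h' : Fin s, h ≠ h' → Disjoint (Is h) (Is h'))
    (hsum : α * I.card ≤ ∑ h, ((Is h).card : ℝ)) :
    ∃ G : Finset (Fin s),
      (α / 4) * I.card ≤ ∑ h ∈ G, ((Is h).card : ℝ) ∧
      ∀ J : Finset ℤ, IsIntervalZ J → J ⊆ I → (∃ h ∈ G, Is h ⊆ J) →
        (α / 4) * J.card ≤
          ∑ h ∈ Finset.univ.filter (fun h => Is h ⊆ J), ((Is h).card : ℝ) := by
  classical
  obtain ⟨A, B, rfl⟩ := hI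
  set Good : Fin s → Prop := fun h => ∀ J : Finset ℤ, IsIntervalZ J → J ⊆ Icc A B → Is h ⊆ J →
    α / 4 * #J ≤ ∑ k with Is k ⊆ J, (#(Is k) : ℝ)
  refine ⟨univ.filter Good, ?_, fun J hJ hJI ⟨h, hG, hhJ⟩ => (mem_filter.1 hG).2 J hJ hJI hhJ⟩
  have hbad : ∑ h with ¬ Good h, (#(Is h) : ℝ) ≤ 3 * (α / 4) * #(Icc A B) := by
    refine sum_card_le_of_light_interval_covers (by positivity) hint (fun h k => hdisj h k)
      fun h hh => ?_
    simpa only [Good, not_forall, not_le, exists_prop] using (mem_filter.1 hh).2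
  linarith [sum_filter_add_sum_filter_not univ Good fun h => (#(Is h) : ℝ)]

theorem stmt_0 (α : ℝ) (hα0 : 0 < α) (hα1 : α < 1)
    (I : Finset ℤ) (hI : IsIntervalZ I)
    (s : ℕ) (Is : Fin s → Finset ℤ)
    (hint : ∀ h, IsIntervalZ (Is h))
    (hsub : ∀ h, Is h ⊆ I)
    (hdisj : ∀ h h' : Fin s, h ≠ h' → Disjoint (Is h) (Is h'))
    (hsum : α * I.card ≤ ∑ h, ((Is h).card : ℝ)) :
    ∃ G : Finset (Fin s),
      (α / 4) * I.card ≤ ∑ h ∈ G, ((Is h).card : ℝ) ∧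
      ∀ J : Finset ℤ, IsIntervalZ J → J ⊆ I → (∃ h ∈ G, Is h ⊆ J) →
        (α / 4) * J.card ≤
          ∑ h ∈ Finset.univ.filter (fun h => Is h ⊆ J), ((Is h).card : ℝ) :=
  stmt_0_general α hα0 I hI s Is hint hdisj hsum
end

section
/- Let f : Fin n → ℝ and k ≥ 2. If f is ε-far from being free of length-k increasing subsequences (i.e., every function g : Fin n → ℝ that contains no increasing subsequence of length k differs from f on at least εn inputs), then f contains a collection of at least εn/k pairwise-disjoint increasing subsequences of length k. -/
/-!
Take a largest family `T` of pairwise disjoint increasing `k`-subsequences of `f` and let `C` be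
the union of their index sets, so `#C ≤ k * #T`. By maximality every increasing `k`-subsequence of
`f` meets `C`. Replacing `f` by `f ∘ r`, where `r` is a monotone retraction of the indices onto the
complement of `C`, changes `f` only on `C`, and an increasing `k`-subsequence `s` of `f ∘ r` would
give the increasing `k`-subsequence `r ∘ s` of `f` avoiding `C`. Hence `ε n ≤ #C ≤ k * #T`.
-/

open Finset

variable {ι α : Type*} {k : ℕ}

def IsIncreasingSubseq [Preorder ι] [Preorder α] (f : ι → α) (s : Fin k → ι) : Prop :=
  StrictMono s ∧ StrictMono (f ∘ s)

def unionRanges [DecidableEq ι] (T : Finset (Fin k → ι)) : Finset ι :=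
  T.biUnion fun s => univ.image s

theorem mem_unionRanges [DecidableEq ι] {T : Finset (Fin k → ι)} {s : Fin k → ι} (hs : s ∈ T)
    (a : Fin k) : s a ∈ unionRanges T :=
  mem_biUnion.mpr ⟨s, hs, mem_image_of_mem s (mem_univ a)⟩

theorem card_unionRanges_le [DecidableEq ι] (T : Finset (Fin k → ι)) :
    #(unionRanges T) ≤ #T * k :=
  card_biUnion_le_card_mul T _ k fun _ _ => card_image_le.trans (card_fin k).le

def PairwiseDisjointRanges (T : Finset (Fin k → ι)) : Prop :=
  ∀ s ∈ T, ∀ t ∈ T, s ≠ t → ∀ a b, s a ≠ t b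

theorem PairwiseDisjointRanges.insert [DecidableEq ι] {T : Finset (Fin k → ι)}
    (hT : PairwiseDisjointRanges T) {s : Fin k → ι} (hs : ∀ a, s a ∉ unionRanges T) :
    PairwiseDisjointRanges (insert s T) := by
  intro t ht u hu hne a b
  rcases mem_insert.mp ht with rfl | ht' <;> rcases mem_insert.mp hu with rfl | hu'
  · exact absurd rfl hne
  · exact fun e => hs a (e ▸ mem_unionRanges hu' b)
  · exact fun e => hs b (e ▸ mem_unionRanges ht' a)
  · exact hT t ht' u hu' hne a b

theorem exists_pairwiseDisjointRanges_forall_meets [Fintype ι] [DecidableEq ι] (hk : 0 < k)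
    (P : (Fin k → ι) → Prop) :
    ∃ T : Finset (Fin k → ι), (∀ s ∈ T, P s) ∧ PairwiseDisjointRanges T ∧
      ∀ s, P s → ∃ a, s a ∈ unionRanges T := by
  classical
  obtain ⟨T, hTmem, hTmax⟩ :=
    exists_max_image (univ.filter fun T => (∀ s ∈ T, P s) ∧ PairwiseDisjointRanges T) card
      ⟨∅, mem_filter.mpr ⟨mem_univ _, by simp [PairwiseDisjointRanges]⟩⟩
  obtain ⟨hTP, hTdisj⟩ := (mem_filter.mp hTmem).2
  refine ⟨T, hTP, hTdisj, fun s hs => ?_⟩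
  by_contra! hmiss
  have hsT : s ∉ T := fun hsT => hmiss ⟨0, hk⟩ (mem_unionRanges hsT _)
  have hinsert := hTmax (insert s T) <| mem_filter.mpr ⟨mem_univ _,
    fun t ht => (mem_insert.mp ht).elim (· ▸ hs) (hTP t), hTdisj.insert hmiss⟩
  rw [card_insert_of_notMem hsT] at hinsert
  omega

theorem Finset.exists_monotone_retraction [LinearOrder ι] (U : Finset ι) (hU : U.Nonempty) :
    ∃ r : ι → ι, Monotone r ∧ (∀ i, r i ∈ U) ∧ ∀ i ∈ U, r i = i := by
  -- `r i` is the last element of `U` up to `i`, or the first element of `U` if there is none.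
  set V : ι → Finset ι := fun i => insert (U.min' hU) (U.filter fun j => j ≤ i)
  have hVU : ∀ i, V i ⊆ U := fun i => insert_subset (U.min'_mem hU) (filter_subset _ _)
  refine ⟨fun i => (V i).max' (insert_nonempty _ _), fun i j hij => ?_,
    fun i => hVU i (max'_mem _ _), fun i hi => le_antisymm ?_ ?_⟩
  · exact max'_subset _ (insert_subset_insert _ (monotone_filter_right _ fun _ _ h => h.trans hij))
  · refine max'_le _ _ _ fun j hj => ?_
    rcases mem_insert.mp hj with rfl | hj
    · exact U.min'_le i hi
    · exact (mem_filter.mp hj).2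
  · exact le_max' (V i) i (mem_insert_of_mem (mem_filter.mpr ⟨hi, le_rfl⟩))

theorem IsIncreasingSubseq.comp_of_monotone [LinearOrder ι] [Preorder α] {f : ι → α}
    {r : ι → ι} {s : Fin k → ι} (hs : IsIncreasingSubseq (f ∘ r) s) (hr : Monotone r) :
    IsIncreasingSubseq f (r ∘ s) :=
  ⟨(hr.comp hs.1.monotone).strictMono_of_injective
    (show Function.Injective (f ∘ (r ∘ s)) from hs.2.injective).of_comp, hs.2⟩

theorem not_isIncreasingSubseq_const [Preorder ι] [Preorder α] (hk : 2 ≤ k) (c : α)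
    (s : Fin k → ι) : ¬ IsIncreasingSubseq (fun _ => c) s := fun hs =>
  lt_irrefl c (hs.2 (show (⟨0, by omega⟩ : Fin k) < ⟨1, by omega⟩ from Nat.zero_lt_one))

theorem exists_eq_off_of_forall_meets [LinearOrder ι] [Fintype ι] [DecidableEq ι] [Preorder α]
    [Nonempty α] (hk : 2 ≤ k) {f : ι → α} {C : Finset ι}
    (hC : ∀ s : Fin k → ι, IsIncreasingSubseq f s → ∃ a, s a ∈ C) :
    ∃ g : ι → α, (¬ ∃ s : Fin k → ι, IsIncreasingSubseq g s) ∧ ∀ i ∉ C, g i = f i := by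
  rcases Cᶜ.eq_empty_or_nonempty with hCc | hCc
  · refine ⟨fun _ => Classical.arbitrary α, fun ⟨s, hs⟩ => not_isIncreasingSubseq_const hk _ s hs,
      fun i hi => absurd (mem_compl.mpr hi) (by simp [hCc])⟩
  obtain ⟨r, hr, hrC, hrfix⟩ := Cᶜ.exists_monotone_retraction hCc
  refine ⟨f ∘ r, fun ⟨s, hs⟩ => ?_, fun i hi => congrArg f (hrfix i (mem_compl.mpr hi))⟩
  obtain ⟨a, ha⟩ := hC _ (hs.comp_of_monotone hr)
  exact mem_compl.mp (hrC (s a)) ha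

theorem stmt_2_general (n k : ℕ) (hk : 2 ≤ k) (ε : ℝ)
    (f : Fin n → ℝ)
    (hfar : ∀ g : Fin n → ℝ,
      (¬ ∃ s : Fin k → Fin n, StrictMono s ∧ StrictMono (g ∘ s)) →
      ε * n ≤ ((Finset.univ.filter (fun i => f i ≠ g i)).card : ℝ)) :
    ∃ T : Finset (Fin k → Fin n),
      (∀ s ∈ T, StrictMono s ∧ StrictMono (f ∘ s)) ∧
      (∀ s ∈ T, ∀ t ∈ T, s ≠ t → ∀ a b, s a ≠ t b) ∧
      ε * n / k ≤ T.card := by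
  obtain ⟨T, hTinc, hTdisj, hmeets⟩ :=
    exists_pairwiseDisjointRanges_forall_meets (k := k) (by omega) (IsIncreasingSubseq f)
  obtain ⟨g, hg, hgf⟩ := exists_eq_off_of_forall_meets hk hmeets
  have hdiff : univ.filter (fun i => f i ≠ g i) ⊆ unionRanges T := fun i hi => by
    by_contra hiC
    exact (mem_filter.mp hi).2 (hgf i hiC).symm
  refine ⟨T, hTinc, hTdisj, ?_⟩
  rw [div_le_iff₀ (by exact_mod_cast (by omega : 0 < k))]
  calc ε * n ≤ #(univ.filter fun i => f i ≠ g i) := hfar g hg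
    _ ≤ #(unionRanges T) := by exact_mod_cast card_le_card hdiff
    _ ≤ #T * k := by exact_mod_cast card_unionRanges_le T

theorem stmt_2 (n k : ℕ) (hk : 2 ≤ k) (ε : ℝ) (hε : 0 < ε)
    (f : Fin n → ℝ)
    (hfar : ∀ g : Fin n → ℝ,
      (¬ ∃ s : Fin k → Fin n, StrictMono s ∧ StrictMono (g ∘ s)) →
      ε * n ≤ ((Finset.univ.filter (fun i => f i ≠ g i)).card : ℝ)) :
    ∃ T : Finset (Fin k → Fin n),
      (∀ s ∈ T, StrictMono s ∧ StrictMono (f ∘ s)) ∧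
      (∀ s ∈ T, ∀ t ∈ T, s ≠ t → ∀ a b, s a ≠ t b) ∧
      ε * n / k ≤ T.card :=
  stmt_2_general n k hk ε f hfar
end

section
/- Let f : Fin n → ℝ and k ≥ 2. If f contains fewer than εn/k pairwise-disjoint length-k increasing subsequences, then one can modify f on fewer than εn inputs to obtain a function with no length-k increasing subsequence. -/
theorem stmt_3 (n k : ℕ) (hk : 2 ≤ k) (ε : ℝ) (hε : 0 < ε) (f : Fin n → ℝ)
    (hfew : ∀ T : Finset (Fin k → Fin n),
      (∀ s ∈ T, StrictMono s ∧ StrictMono (f ∘ s)) →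
      (∀ s ∈ T, ∀ t ∈ T, s ≠ t → ∀ a b, s a ≠ t b) →
      (T.card : ℝ) < ε * n / k) :
    ∃ g : Fin n → Option ℝ,
      (¬ ∃ s : Fin k → Fin n, StrictMono s ∧
        ∃ v : Fin k → ℝ, StrictMono v ∧ ∀ a, g (s a) = some (v a)) ∧
      ((Finset.univ.filter (fun i => g i ≠ some (f i))).card : ℝ) < ε * n := by
  classical
  have hk0 : 0 < k := lt_of_lt_of_le two_pos hk
  set Valid : Finset (Fin k → Fin n) → Prop := fun T =>
    (∀ s ∈ T, StrictMono s ∧ StrictMono (f ∘ s)) ∧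
    (∀ s ∈ T, ∀ t ∈ T, s ≠ t → ∀ a b, s a ≠ t b) with hValid
  have hne : (Finset.univ.filter Valid).Nonempty := by
    refine ⟨∅, ?_⟩
    simp [Valid]
  obtain ⟨T, hTmem, hTmax⟩ := Finset.exists_max_image _ Finset.card hne
  have hT : Valid T := (Finset.mem_filter.mp hTmem).2
  set S : Finset (Fin n) := T.biUnion (fun s => Finset.image s Finset.univ) with hS
  refine ⟨fun i => if i ∈ S then none else some (f i), ?_, ?_⟩
  · rintro ⟨s, hs, v, hv, hgv⟩
    have hnotS : ∀ a, s a ∉ S := by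
      intro a ha
      have := hgv a
      simp [ha] at this
    have hfv : ∀ a, f (s a) = v a := by
      intro a
      have := hgv a
      simp [hnotS a] at this
      exact this
    have hfs : StrictMono (f ∘ s) := by
      intro a b hab
      simpa [Function.comp, hfv] using hv hab
    have hdisj : ∀ t ∈ T, ∀ a b, s a ≠ t b := by
      intro t ht a b heq
      exact hnotS a (Finset.mem_biUnion.mpr ⟨t, ht, by
        rw [heq]; exact Finset.mem_image_of_mem _ (Finset.mem_univ b)⟩)
    have hsT : s ∉ T := fun h => hdisj s h ⟨0, hk0⟩ ⟨0, hk0⟩ rfl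
    have hvalid' : Valid (insert s T) := by
      constructor
      · intro t ht
        rcases Finset.mem_insert.mp ht with rfl | ht
        · exact ⟨hs, hfs⟩
        · exact hT.1 t ht
      · intro t1 ht1 t2 ht2 hne' a b
        rcases Finset.mem_insert.mp ht1 with rfl | ht1'
        · rcases Finset.mem_insert.mp ht2 with rfl | ht2'
          · exact absurd rfl hne'
          · exact hdisj t2 ht2' a b
        · rcases Finset.mem_insert.mp ht2 with rfl | ht2'
          · exact fun h => hdisj t1 ht1' b a h.symm
          · exact hT.2 t1 ht1' t2 ht2' hne' a b
    have hmem' : insert s T ∈ Finset.univ.filter Valid := by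
      exact Finset.mem_filter.mpr ⟨Finset.mem_univ _, hvalid'⟩
    have := hTmax _ hmem'
    rw [Finset.card_insert_of_notMem hsT] at this
    omega
  · have hsub : (Finset.univ.filter
        (fun i => (if i ∈ S then none else some (f i)) ≠ some (f i))) ⊆ S := by
      intro i hi
      simp only [Finset.mem_filter] at hi
      by_contra h
      exact hi.2 (by simp [h])
    have hScard : S.card ≤ T.card * k := by
      calc S.card ≤ ∑ t ∈ T, (Finset.image t Finset.univ).card :=
            Finset.card_biUnion_le
        _ ≤ ∑ t ∈ T, k := by
            refine Finset.sum_le_sum fun t _ => ?_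
            simpa using (Finset.card_image_le (s := (Finset.univ : Finset (Fin k))) (f := t))
        _ = T.card * k := by rw [Finset.sum_const, smul_eq_mul]
    have hTlt : (T.card : ℝ) < ε * n / k := hfew T hT.1 hT.2
    have hk0' : (0:ℝ) < k := by exact_mod_cast hk0
    calc ((Finset.univ.filter
          (fun i => (if i ∈ S then none else some (f i)) ≠ some (f i))).card : ℝ)
        ≤ (S.card : ℝ) := by exact_mod_cast Finset.card_le_card hsub
      _ ≤ (T.card : ℝ) * k := by exact_mod_cast hScard
      _ < (ε * n / k) * k := by exact mul_lt_mul_of_pos_right hTlt hk0'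
      _ = ε * n := by field_simp
end

section
/- A function f : Fin n → ℝ contains no increasing subsequence of length k (for k ≥ 2) if and only if the index set Fin n can be partitioned into at most k−1 sets, on each of which f is non-increasing (i.e., i < j in the same part implies f(i) ≥ f(j)). -/
/-!
Let `incRank f a` be the largest `m` such that an increasing subsequence of length `m + 1`
starts at `a`. Prepending `a` to a longest one starting at `b` shows that
`incRank f b < incRank f a` whenever `a < b` and `f a < f b`, so `f` is non-increasing on each
level set of `incRank f`; if there is no increasing subsequence of length `m + 1`, its values
lie in `Fin m`. Conversely, given such a partition into `m` parts, two of the `m + 1` terms of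
an increasing subsequence lie in the same part by pigeonhole, which is impossible.
-/

namespace IncreasingSubsequence

variable {α : Type*} [Preorder α]

section Preorder

variable {β : Type*} [Preorder β] (f : α → β)

def HasIncSubseqFrom (m : ℕ) (a : α) : Prop :=
  ∃ s : Fin (m + 1) → α, StrictMono s ∧ StrictMono (f ∘ s) ∧ s 0 = a

variable {f}

lemma hasIncSubseqFrom_zero (a : α) : HasIncSubseqFrom f 0 a :=
  ⟨fun _ => a, Subsingleton.strictMono (α := Fin 1) _,
    Subsingleton.strictMono (α := Fin 1) _, rfl⟩

lemma HasIncSubseqFrom.cons {m : ℕ} {a b : α} (h : HasIncSubseqFrom f m b) (hab : a < b)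
    (hf : f a < f b) : HasIncSubseqFrom f (m + 1) a := by
  obtain ⟨s, hs, hfs, rfl⟩ := h
  refine ⟨Fin.cons a s, ?_, ?_, rfl⟩
  · exact Fin.strictMono_cons.2 ⟨fun t => hab.trans_le (hs.monotone (Fin.zero_le t)), hs⟩
  · rw [Fin.comp_cons]
    exact Fin.strictMono_cons.2 ⟨fun t => hf.trans_le (hfs.monotone (Fin.zero_le t)), hfs⟩

lemma HasIncSubseqFrom.lt_card [Fintype α] {m : ℕ} {a : α} (h : HasIncSubseqFrom f m a) :
    m < Fintype.card α := by
  obtain ⟨s, hs, -, -⟩ := h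
  simpa using Fintype.card_le_of_injective s hs.injective

variable (f) in
open Classical in
noncomputable def incRank [Fintype α] (a : α) : ℕ :=
  Nat.findGreatest (HasIncSubseqFrom f · a) (Fintype.card α)

lemma hasIncSubseqFrom_incRank [Fintype α] (a : α) : HasIncSubseqFrom f (incRank f a) a := by
  classical
  exact Nat.findGreatest_spec (P := (HasIncSubseqFrom f · a)) (Nat.zero_le _)
    (hasIncSubseqFrom_zero a)

lemma incRank_lt_incRank [Fintype α] {a b : α} (hab : a < b) (hf : f a < f b) :
    incRank f b < incRank f a := by
  classical
  have h := (hasIncSubseqFrom_incRank b).cons hab hf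
  exact Nat.lt_of_succ_le (Nat.le_findGreatest h.lt_card.le h)

lemma not_exists_incSubseq_of_partition {γ : Type*} [Fintype γ] {k : ℕ}
    (hk : Fintype.card γ < k) (P : α → γ)
    (hP : ∀ i j : α, i < j → P i = P j → f j ≤ f i) :
    ¬ ∃ s : Fin k → α, StrictMono s ∧ StrictMono (f ∘ s) := by
  rintro ⟨s, hs, hfs⟩
  obtain ⟨a, b, hne, heq⟩ := Fintype.exists_ne_map_eq_of_card_lt (P ∘ s) (by simpa using hk)
  rcases hne.lt_or_gt with hab | hba
  · exact (hP _ _ (hs hab) heq).not_gt (hfs hab)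
  · exact (hP _ _ (hs hba) heq.symm).not_gt (hfs hba)

end Preorder

variable {β : Type*} [LinearOrder β] [Fintype α]

lemma exists_partition_of_not_exists_incSubseq {f : α → β} {m : ℕ}
    (h : ¬ ∃ s : Fin (m + 1) → α, StrictMono s ∧ StrictMono (f ∘ s)) :
    ∃ P : α → Fin m, ∀ i j : α, i < j → P i = P j → f j ≤ f i := by
  have hlt (a : α) : incRank f a < m := by
    by_contra! hm
    obtain ⟨s, hs, hfs, -⟩ := hasIncSubseqFrom_incRank (f := f) a
    have hle : m + 1 ≤ incRank f a + 1 := Nat.succ_le_succ hm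
    exact h ⟨s ∘ Fin.castLE hle, hs.comp (Fin.strictMono_castLE hle),
      hfs.comp (Fin.strictMono_castLE hle)⟩
  refine ⟨fun a => ⟨incRank f a, hlt a⟩, fun i j hij hP => not_lt.1 fun hf => ?_⟩
  exact (incRank_lt_incRank hij hf).ne (congrArg Fin.val hP).symm

theorem not_exists_incSubseq_iff_exists_partition (f : α → β) (m : ℕ) :
    (¬ ∃ s : Fin (m + 1) → α, StrictMono s ∧ StrictMono (f ∘ s)) ↔
      ∃ P : α → Fin m, ∀ i j : α, i < j → P i = P j → f j ≤ f i :=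
  ⟨exists_partition_of_not_exists_incSubseq,
    fun ⟨P, hP⟩ => not_exists_incSubseq_of_partition (by simp) P hP⟩

end IncreasingSubsequence

theorem stmt_4 (n k : ℕ) (hk : 2 ≤ k) (f : Fin n → ℝ) :
    (¬ ∃ s : Fin k → Fin n, StrictMono s ∧ StrictMono (f ∘ s)) ↔
    ∃ P : Fin n → Fin (k - 1),
      ∀ i j : Fin n, i < j → P i = P j → f j ≤ f i := by
  obtain ⟨m, rfl⟩ : ∃ m, k = m + 1 := ⟨k - 1, by omega⟩
  exact IncreasingSubsequence.not_exists_incSubseq_iff_exists_partition f m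
end

section
/- Suppose x < y are indices of f : Fin n → ℝ with f(x) < f(y), and J₁, …, J_{k−2} are pairwise disjoint intervals appearing in this order inside (x, y). For each i ∈ [k−2], suppose that J_i either contains an increasing subsequence of length i+1 all of whose values are < f(y) (call J_i 'type 1') or contains an increasing subsequence of length k−i all of whose values are ≥ f(y) ('type 2'). Then f contains an increasing subsequence of length k. Specifically: if J₁ is type 2, prepend x to its length-(k−1) sequence; if J_{k−2} is type 1, append y to its length-(k−1) sequence; otherwise there exists i ∈ [k−3] with J_i type 1 and J_{i+1} type 2, and concatenating the length-(i+1) sequence in J_i (values < f(y)) with the length-(k−i−1) sequence in J_{i+1} (values ≥ f(y)) yields an increasing subsequence of length k. -/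
/-!
Numbering the intervals from 1, call `J i` low when it holds an increasing run of length
`i + 1` with values below `f y`, and high otherwise, in which case it holds one of length
`k - i` with values `≥ f y`. If `J 1` is high, `x` followed by its run works; if `J (k - 2)`
is low, its run followed by `y` works. Otherwise some low `J i` is followed by a high
`J (i + 1)`, and the two runs concatenate to length `(i + 1) + (k - i - 1) = k`.
-/

namespace Fin

variable {α β : Type*} {a b : ℕ}

lemma comp_append (f : α → β) (g : Fin a → α) (h : Fin b → α) :
    f ∘ append g h = append (f ∘ g) (f ∘ h) := by
  funext i
  induction i using addCases <;> simp

lemma strictMono_append [Preorder α] {g : Fin a → α} {h : Fin b → α} (hg : StrictMono g)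
    (hh : StrictMono h) (hgh : ∀ p q, g p < h q) : StrictMono (append g h) := by
  intro i j hij
  induction i using addCases with
  | left p =>
    induction j using addCases with
    | left q => simpa using hg ((strictMono_castAdd b).lt_iff_lt.mp hij)
    | right q => simpa using hgh p q
  | right p =>
    induction j using addCases with
    | left q => simp [lt_def] at hij; omega
    | right q => simpa using hh ((strictMono_natAdd a).lt_iff_lt.mp hij)

end Fin

lemma Nat.exists_lt_and_not_succ {P : ℕ → Prop} {N : ℕ} (h0 : P 0) (hN : ¬ P N) :
    ∃ m < N, P m ∧ ¬ P (m + 1) := by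
  induction N with
  | zero => exact absurd h0 hN
  | succ N ih =>
    by_cases hP : P N
    · exact ⟨N, N.lt_succ_self, hP, hN⟩
    · obtain ⟨m, hm, h⟩ := ih hP
      exact ⟨m, hm.trans N.lt_succ_self, h⟩

lemma exists_increasing_of_append {ι β : Type*} [Preorder ι] [Preorder β] (f : ι → β)
    {a b m : ℕ} (hm : a + b = m) {g : Fin a → ι} {h : Fin b → ι}
    (hg : StrictMono g) (hgf : StrictMono (f ∘ g)) (hh : StrictMono h) (hhf : StrictMono (f ∘ h))
    (hlt : ∀ p q, g p < h q) (hflt : ∀ p q, f (g p) < f (h q)) :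
    ∃ u : Fin m → ι, StrictMono u ∧ StrictMono (f ∘ u) := by
  subst hm
  refine ⟨Fin.append g h, Fin.strictMono_append hg hh hlt, ?_⟩
  rw [Fin.comp_append]
  exact Fin.strictMono_append hgf hhf hflt

theorem stmt_6_general (n k : ℕ) (hk : 3 ≤ k) (f : Fin n → ℝ)
    (x y : Fin n) (hfxy : f x < f y)
    (J : Fin (k - 2) → Finset (Fin n))
    (hbetween : ∀ i, ∀ a ∈ J i, x < a ∧ a < y)
    (horder : ∀ i i' : Fin (k - 2), i < i' → ∀ a ∈ J i, ∀ b ∈ J i', a < b)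
    (htype : ∀ i : Fin (k - 2),
      (∃ s : Fin (i.val + 2) → Fin n, StrictMono s ∧ StrictMono (f ∘ s) ∧
        (∀ a, s a ∈ J i) ∧ ∀ a, f (s a) < f y) ∨
      (∃ s : Fin (k - i.val - 1) → Fin n, StrictMono s ∧ StrictMono (f ∘ s) ∧
        (∀ a, s a ∈ J i) ∧ ∀ a, f y ≤ f (s a))) :
    ∃ u : Fin k → Fin n, StrictMono u ∧ StrictMono (f ∘ u) := by
  have hk2 : 0 < k - 2 := by omega
  have hk3 : k - 3 < k - 2 := by omega
  -- `Low m` says that the interval with 0-based index `m` is low; it is a predicate on `ℕ` so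
  -- that `Nat.exists_lt_and_not_succ` can locate the switch from low to high.
  set Low : ℕ → Prop := fun m => ∀ hm : m < k - 2, ∃ s : Fin (m + 2) → Fin n, StrictMono s ∧
    StrictMono (f ∘ s) ∧ (∀ a, s a ∈ J ⟨m, hm⟩) ∧ ∀ a, f (s a) < f y
  have hpoint : ∀ z : Fin n, StrictMono (fun _ : Fin 1 => z) ∧ StrictMono (f ∘ fun _ : Fin 1 => z) :=
    fun _ => ⟨Subsingleton.strictMono _, Subsingleton.strictMono _⟩
  by_cases hlast : Low (k - 3)
  · obtain ⟨s, hs, hfs, hsJ, hsy⟩ := hlast hk3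
    exact exists_increasing_of_append f (by omega) hs hfs (hpoint y).1 (hpoint y).2
      (fun p _ => (hbetween _ _ (hsJ p)).2) (fun p _ => hsy p)
  by_cases hfirst : Low 0
  · obtain ⟨m, hm, hlow, hhigh⟩ := Nat.exists_lt_and_not_succ hfirst hlast
    obtain ⟨s, hs, hfs, hsJ, hsy⟩ := hlow (hm.trans hk3)
    obtain ⟨hm', hhigh⟩ := not_forall.mp hhigh
    obtain ⟨t, ht, hft, htJ, hty⟩ := (htype ⟨m + 1, hm'⟩).resolve_left hhigh
    exact exists_increasing_of_append f (by simp only; omega) hs hfs ht hft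
      (fun p q => horder _ _ (Fin.mk_lt_mk.mpr m.lt_succ_self) _ (hsJ p) _ (htJ q))
      (fun p q => (hsy p).trans_le (hty q))
  · obtain ⟨t, ht, hft, htJ, hty⟩ :=
      (htype ⟨0, hk2⟩).resolve_left fun h => hfirst fun _ => h
    exact exists_increasing_of_append f (by simp only; omega) (hpoint x).1 (hpoint x).2 ht hft
      (fun _ q => (hbetween _ _ (htJ q)).1) (fun _ q => hfxy.trans_le (hty q))

theorem stmt_6 (n k : ℕ) (hk : 3 ≤ k) (f : Fin n → ℝ)
    (x y : Fin n) (hxy : x < y) (hfxy : f x < f y)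
    (J : Fin (k - 2) → Finset (Fin n))
    (hJint : ∀ i, ∃ a b : Fin n, J i = Finset.Icc a b)
    (hbetween : ∀ i, ∀ a ∈ J i, x < a ∧ a < y)
    (horder : ∀ i i' : Fin (k - 2), i < i' → ∀ a ∈ J i, ∀ b ∈ J i', a < b)
    (htype : ∀ i : Fin (k - 2),
      (∃ s : Fin (i.val + 2) → Fin n, StrictMono s ∧ StrictMono (f ∘ s) ∧
        (∀ a, s a ∈ J i) ∧ ∀ a, f (s a) < f y) ∨
      (∃ s : Fin (k - i.val - 1) → Fin n, StrictMono s ∧ StrictMono (f ∘ s) ∧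
        (∀ a, s a ∈ J i) ∧ ∀ a, f y ≤ f (s a))) :
    ∃ u : Fin k → Fin n, StrictMono u ∧ StrictMono (f ∘ u) :=
  stmt_6_general n k hk f x y hfxy J hbetween horder htype
end
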